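/- Let A and B be C*-algebras such that Glimm(B) is finite. Then the product topology τ_p and the complete regularisation topology τ_cr coincide on Glimm(A) × Glimm(B), i.e. the canonical bijection ρ(Prim(A)) × ρ(Prim(B)) → ρ(Prim(A) × Prim(B)) is a homeomorphism. -/
import Mathlib


open Topology

/-- The inseparability-by-bounded-continuous-functions setoid on a topological space. -/
def crSetoid (X : Type*) [TopologicalSpace X] : Setoid X where
  r x y := ∀ f : BoundedContinuousFunction X ℝ, f x = f y
  iseqv := ⟨fun _ _ => rfl, fun h f => (h f).symm, fun h1 h2 f => (h1 f).trans (h2 f)⟩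

/-- The complete regularisation of a topological space, as a set of equivalence classes. -/
def CR (X : Type*) [TopologicalSpace X] : Type _ := Quotient (crSetoid X)

/-- The complete regularisation quotient map. -/
def crMk (X : Type*) [TopologicalSpace X] (x : X) : CR X := Quotient.mk (crSetoid X) x

/-- The function on `CR X` induced by a bounded continuous function on `X`. -/
def crLift {X : Type*} [TopologicalSpace X] (f : BoundedContinuousFunction X ℝ) : CR X → ℝ :=
  Quotient.lift f fun _ _ h => h f

/-- The topology `τ_cr` on the complete regularisation: the weak topology induced by the
functions coming from bounded continuous functions on `X`. -/
instance CR.instTopologicalSpace (X : Type*) [TopologicalSpace X] : TopologicalSpace (CR X) :=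
  ⨅ f : BoundedContinuousFunction X ℝ, TopologicalSpace.induced (crLift f) inferInstance

/-- The topology generated by cozero sets of continuous real-valued functions. -/
def cozTop (X : Type*) [TopologicalSpace X] : TopologicalSpace X :=
  TopologicalSpace.generateFrom {U | ∃ f : C(X, ℝ), U = {x | f x ≠ 0}}

/-- A space is w-compact if every open cover has a finite subfamily whose union is dense in the
topology generated by cozero sets. -/
def WCompact (X : Type*) [TopologicalSpace X] : Prop :=
  ∀ U : Set (Set X), (∀ u ∈ U, IsOpen u) → ⋃₀ U = Set.univ →
    ∃ F ⊆ U, F.Finite ∧ @closure X (cozTop X) (⋃₀ F) = Set.univ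

universe v

/-- A two-sided ideal of a ring is primitive if it is the annihilator of a simple module. -/
def IsPrimitiveIdeal (A : Type v) [Ring A] (P : TwoSidedIdeal A) : Prop :=
  ∃ (M : Type v) (_ : AddCommGroup M) (_ : Module A M),
    IsSimpleModule A M ∧ ∀ a : A, a ∈ P ↔ ∀ m : M, a • m = 0

/-- The primitive ideal space of a ring. -/
def PrimSpace (A : Type v) [Ring A] : Type v := {P : TwoSidedIdeal A // IsPrimitiveIdeal A P}

/-- The hull-kernel (Jacobson) topology on the primitive ideal space: open sets are generated
by the complements of hulls of two-sided ideals. -/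
instance PrimSpace.instTopologicalSpace (A : Type v) [Ring A] : TopologicalSpace (PrimSpace A) :=
  TopologicalSpace.generateFrom
    {U | ∃ I : TwoSidedIdeal A, U = {P : PrimSpace A | ¬ I ≤ P.1}}

section CRProd

variable {X Y : Type*} [TopologicalSpace X] [TopologicalSpace Y]

lemma continuous_crLift (f : BoundedContinuousFunction X ℝ) : Continuous (crLift f) :=
  continuous_iInf_dom (i := f) continuous_induced_dom

lemma continuous_crMk : Continuous (crMk X) :=
  continuous_iInf_rng.2 fun f => continuous_induced_rng.2 (by exact f.continuous)

instance CR.instT2Space : T2Space (CR X) := by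
  constructor
  intro a b hab
  induction a using Quotient.ind with | _ x => ?_
  induction b using Quotient.ind with | _ y => ?_
  have hf : ∃ f : BoundedContinuousFunction X ℝ, f x ≠ f y := by
    by_contra h
    push_neg at h
    exact hab (Quotient.sound h)
  obtain ⟨f, hf⟩ := hf
  exact separated_by_continuous (continuous_crLift f) hf

lemma cr_prod_rel {x x' : X} {y y' : Y}
    (hx : ∀ f : BoundedContinuousFunction X ℝ, f x = f x')
    (hy : ∀ f : BoundedContinuousFunction Y ℝ, f y = f y')
    (h : BoundedContinuousFunction (X × Y) ℝ) : h (x, y) = h (x', y') := by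
  have h1 : h (x, y) = h (x, y') :=
    hy (h.compContinuous ⟨fun b => (x, b), by continuity⟩)
  have h2 : h (x, y') = h (x', y') :=
    hx (h.compContinuous ⟨fun a => (a, y'), by continuity⟩)
  exact h1.trans h2

/-- The canonical map `CR X × CR Y → CR (X × Y)`. -/
def crProdMap : CR X × CR Y → CR (X × Y) := fun p =>
  Quotient.liftOn₂ p.1 p.2 (fun x y => crMk (X × Y) (x, y))
    (fun _ _ _ _ hx hy => Quotient.sound fun h => cr_prod_rel hx hy h)

/-- The canonical map `CR (X × Y) → CR X × CR Y`. -/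
def crProdInv : CR (X × Y) → CR X × CR Y :=
  Quotient.lift (fun p : X × Y => (crMk X p.1, crMk Y p.2))
    (fun p q h => Prod.ext
      (Quotient.sound fun f => h (f.compContinuous ⟨Prod.fst, continuous_fst⟩))
      (Quotient.sound fun f => h (f.compContinuous ⟨Prod.snd, continuous_snd⟩)))

lemma continuous_crProdInv :
    Continuous (crProdInv : CR (X × Y) → CR X × CR Y) := by
  apply Continuous.prodMk
  · refine continuous_iInf_rng.2 fun f => continuous_induced_rng.2 ?_
    have : (crLift f) ∘ (fun c => (crProdInv (X := X) (Y := Y) c).1)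
        = crLift (f.compContinuous ⟨Prod.fst, continuous_fst⟩) := by
      funext c
      induction c using Quotient.ind with | _ p => rfl
    exact this ▸ continuous_crLift _
  · refine continuous_iInf_rng.2 fun f => continuous_induced_rng.2 ?_
    have : (crLift f) ∘ (fun c => (crProdInv (X := X) (Y := Y) c).2)
        = crLift (f.compContinuous ⟨Prod.snd, continuous_snd⟩) := by
      funext c
      induction c using Quotient.ind with | _ p => rfl
    exact this ▸ continuous_crLift _

lemma continuous_of_discrete_snd {P D Z : Type*} [TopologicalSpace P] [TopologicalSpace D]
    [DiscreteTopology D] [TopologicalSpace Z] {f : P × D → Z}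
    (hf : ∀ d, Continuous fun p => f (p, d)) : Continuous f := by
  rw [continuous_iff_continuousAt]
  rintro ⟨a, d⟩
  unfold ContinuousAt
  rw [nhds_prod_eq, nhds_discrete D]
  have h1 : Filter.Tendsto ((fun p : P => f (p, d)) ∘ Prod.fst)
      ((𝓝 a) ×ˢ (pure d : Filter D)) (𝓝 (f (a, d))) :=
    Filter.Tendsto.comp ((hf d).continuousAt (x := a)) Filter.tendsto_fst
  refine Filter.Tendsto.congr' ?_ h1
  have hev : ∀ᶠ p : P × D in (𝓝 a) ×ˢ (pure d : Filter D), p.2 = d :=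
    Filter.tendsto_snd.eventually (show ∀ᶠ x in (pure d : Filter D), x = d from Filter.eventually_pure.2 rfl)
  filter_upwards [hev] with p hp
  simp only [Function.comp]
  rw [← hp]

lemma continuous_crProdMap [Finite (CR Y)] :
    Continuous (crProdMap : CR X × CR Y → CR (X × Y)) := by
  haveI : DiscreteTopology (CR Y) := Finite.instDiscreteTopology
  refine continuous_iInf_rng.2 fun h => continuous_induced_rng.2 ?_
  apply continuous_of_discrete_snd
  intro d
  induction d using Quotient.ind with | _ y => ?_
  have key : (fun a : CR X => (crLift h ∘ crProdMap) (a, Quotient.mk (crSetoid Y) y))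
      = crLift (h.compContinuous ⟨fun x => (x, y), by continuity⟩) := by
    funext a
    induction a using Quotient.ind with | _ x => rfl
  exact key ▸ continuous_crLift _

/-- The canonical homeomorphism when `CR Y` is finite. -/
def crProdHomeomorph [Finite (CR Y)] : CR X × CR Y ≃ₜ CR (X × Y) where
  toFun := crProdMap
  invFun := crProdInv
  left_inv := by
    rintro ⟨a, b⟩
    induction a using Quotient.ind with | _ x => ?_
    induction b using Quotient.ind with | _ y => ?_
    rfl
  right_inv := by
    intro c
    induction c using Quotient.ind with | _ p => rfl
  continuous_toFun := continuous_crProdMap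
  continuous_invFun := continuous_crProdInv

end CRProd

theorem stmt18 {A B : Type*} [CStarAlgebra A] [CStarAlgebra B]
    [Finite (CR (PrimSpace B))] :
    ∃ e : CR (PrimSpace A) × CR (PrimSpace B) ≃ₜ CR (PrimSpace A × PrimSpace B),
      ∀ (P : PrimSpace A) (Q : PrimSpace B),
        e (crMk (PrimSpace A) P, crMk (PrimSpace B) Q) =
          crMk (PrimSpace A × PrimSpace B) (P, Q) := by
  exact ⟨crProdHomeomorph, fun P Q => rfl⟩
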